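/- arXiv:2509.10831 — 4 statements merged into one kernel-verified Lean document; each statement's English description precedes it below -/
import Mathlib

section
/- Let x : ℝ → ℝ be continuous with |x(t)| ≤ c for all t, and let b > c > 0, δ > 0, σ > 0, Δ ≥ 0. Suppose t' > t + Δ satisfies (1/σ)·∫_{t+Δ}^{t'} (x(s) + b) ds = δ. Then the inter-spike interval T = t' − t satisfies σδ/(b + c) + Δ ≤ T ≤ σδ/(b − c) + Δ. -/
theorem stmt1 (x : ℝ → ℝ) (c b δ σ Δ t t' : ℝ)
    (hx : Continuous x) (hc : ∀ s, |x s| ≤ c) (hb : b > c) (hc0 : c > 0)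
    (hδ : δ > 0) (hσ : σ > 0) (hΔ : Δ ≥ 0) (ht : t' > t + Δ)
    (hfire : (1 / σ) * ∫ s in (t + Δ)..t', (x s + b) = δ) :
    σ * δ / (b + c) + Δ ≤ t' - t ∧ t' - t ≤ σ * δ / (b - c) + Δ := by
  have hint : (∫ s in (t + Δ)..t', (x s + b)) = σ * δ := by
    field_simp at hfire
    linarith [hfire]
  have hI : IntervalIntegrable (fun s => x s + b) MeasureTheory.volume (t + Δ) t' :=
    (hx.add continuous_const).intervalIntegrable _ _
  have hle : t + Δ ≤ t' := le_of_lt ht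
  have hlow : (b - c) * (t' - (t + Δ)) ≤ σ * δ := by
    have := intervalIntegral.integral_mono_on hle
      (intervalIntegrable_const (c := b - c)) hI
      (fun s _ => by have := abs_le.mp (hc s); linarith)
    simp [intervalIntegral.integral_const, smul_eq_mul, hint] at this; nlinarith [this]
  have hhigh : σ * δ ≤ (b + c) * (t' - (t + Δ)) := by
    have := intervalIntegral.integral_mono_on hle hI
      (intervalIntegrable_const (c := b + c))
      (fun s _ => by have := abs_le.mp (hc s); linarith)
    simp [intervalIntegral.integral_const, smul_eq_mul, hint] at this; nlinarith [this]
  have hbc : b + c > 0 := by linarith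
  have hbc' : b - c > 0 := by linarith
  constructor
  · rw [div_add' _ _ _ (ne_of_gt hbc), div_le_iff₀ hbc]
    nlinarith
  · rw [div_add' _ _ _ (ne_of_gt hbc'), le_div_iff₀ hbc']
    nlinarith
end

section
/- Let x : ℝ → ℝ be continuous with |x(t)| ≤ c, and let b > c > 0, δ > 0. Suppose σ ∈ [σ_inf, σ_sup] with 0 < σ_inf ≤ σ_sup, and Δ ∈ [Δ_inf, Δ_sup] with 0 ≤ Δ_inf ≤ Δ_sup. If t' > t + Δ satisfies (1/σ)·∫_{t+Δ}^{t'}(x(s)+b) ds = δ, then σ_inf·δ/(b+c) + Δ_inf ≤ t' − t ≤ σ_sup·δ/(b−c) + Δ_sup. -/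
theorem stmt2 (x : ℝ → ℝ) (c b δ σ Δ σinf σsup Δinf Δsup t t' : ℝ)
    (hx : Continuous x) (hc : ∀ s, |x s| ≤ c) (hb : b > c) (hc0 : c > 0) (hδ : δ > 0)
    (hσinf : 0 < σinf) (hσord : σinf ≤ σsup) (hσ : σ ∈ Set.Icc σinf σsup)
    (hΔinf : 0 ≤ Δinf) (hΔord : Δinf ≤ Δsup) (hΔ : Δ ∈ Set.Icc Δinf Δsup)
    (ht : t' > t + Δ)
    (hfire : (1 / σ) * ∫ s in (t + Δ)..t', (x s + b) = δ) :
    σinf * δ / (b + c) + Δinf ≤ t' - t ∧ t' - t ≤ σsup * δ / (b - c) + Δsup := by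
  have hσ0 : 0 < σ := lt_of_lt_of_le hσinf hσ.1
  have hle : t + Δ ≤ t' := le_of_lt ht
  have hint : IntervalIntegrable (fun s => x s + b) MeasureTheory.volume (t + Δ) t' :=
    (hx.add continuous_const).intervalIntegrable _ _
  have hI : (∫ s in (t + Δ)..t', (x s + b)) = σ * δ := by
    field_simp at hfire
    linarith [hfire]
  have hconst : ∀ a : ℝ, (∫ _ in (t + Δ)..t', a) = (t' - (t + Δ)) * a := by
    intro a; simp [intervalIntegral.integral_const, smul_eq_mul]
  have hup : σ * δ ≤ (t' - (t + Δ)) * (b + c) := by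
    rw [← hI, ← hconst]
    apply intervalIntegral.integral_mono_on hle hint (intervalIntegrable_const)
    intro s _
    have := abs_le.1 (hc s); linarith [this.2]
  have hlo : (t' - (t + Δ)) * (b - c) ≤ σ * δ := by
    rw [← hI, ← hconst]
    apply intervalIntegral.integral_mono_on hle (intervalIntegrable_const) hint
    intro s _
    have := abs_le.1 (hc s); linarith [this.1]
  have hbc : (0:ℝ) < b + c := by linarith
  have hbc' : (0:ℝ) < b - c := by linarith
  constructor
  · have h1 : σinf * δ ≤ σ * δ := by nlinarith [hσ.1]
    have h2 : σinf * δ / (b + c) ≤ t' - (t + Δ) := by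
      rw [div_le_iff₀ hbc]; linarith
    linarith [hΔ.1]
  · have h1 : σ * δ ≤ σsup * δ := by nlinarith [hσ.2]
    have h2 : t' - (t + Δ) ≤ σsup * δ / (b - c) := by
      rw [le_div_iff₀ hbc']; linarith
    linarith [hΔ.2]
end

section
/- Let x : ℝ → ℝ be continuous with |x(t)| ≤ c, and b > c > 0, δ > 0, σ > 0, Δ ≥ 0. Consider the sequence of firing times defined recursively: given t_n, the next firing t_{n+1} is the unique time > t_n + Δ with (1/σ)·∫_{t_n+Δ}^{t_{n+1}} (x(s)+b) ds = δ. Then such t_{n+1} always exists, is unique, and the sequence (t_n) is strictly increasing and tends to +∞. -/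
open intervalIntegral MeasureTheory

theorem stmt6 (x : ℝ → ℝ) (c b δ σ Δ : ℝ)
    (hx : Continuous x) (hc : ∀ s, |x s| ≤ c) (hb : b > c) (hc0 : c > 0)
    (hδ : δ > 0) (hσ : σ > 0) (hΔ : Δ ≥ 0) :
    (∀ tn : ℝ, ∃! t' : ℝ, t' > tn + Δ ∧
        (1 / σ) * ∫ s in (tn + Δ)..t', (x s + b) = δ) ∧
    (∀ t : ℕ → ℝ,
      (∀ n, t (n + 1) > t n + Δ ∧
        (1 / σ) * ∫ s in (t n + Δ)..(t (n + 1)), (x s + b) = δ) →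
      StrictMono t ∧ Filter.Tendsto t Filter.atTop Filter.atTop) := by
  have hcont : Continuous fun s => x s + b := hx.add continuous_const
  have hInt : ∀ a t : ℝ, IntervalIntegrable (fun s => x s + b) volume a t :=
    fun a t => hcont.intervalIntegrable a t
  have hpos : ∀ s, (0:ℝ) < x s + b := by
    intro s
    have := abs_le.1 (hc s)
    linarith [this.1]
  -- strict monotonicity of the primitive
  have hmono : ∀ a : ℝ, StrictMono (fun t => ∫ s in a..t, (x s + b)) := by
    intro a t1 t2 h12
    have key : (0:ℝ) < ∫ s in t1..t2, (x s + b) :=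
      intervalIntegral_pos_of_pos (hInt t1 t2) hpos h12
    have := integral_add_adjacent_intervals (hInt a t1) (hInt t1 t2)
    simp only
    linarith
  have hlb : ∀ a t : ℝ, a ≤ t → (b - c) * (t - a) ≤ ∫ s in a..t, (x s + b) := by
    intro a t hat
    have h1 : ∫ s in a..t, (b - c) ≤ ∫ s in a..t, (x s + b) := by
      apply integral_mono_on hat (intervalIntegrable_const) (hInt a t)
      intro s _
      have := abs_le.1 (hc s)
      linarith [this.1]
    have h0 : (∫ _s in a..t, ((b:ℝ) - c)) = (t - a) * (b - c) := by
      simp [smul_eq_mul]; ring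
    nlinarith [h1, h0]
  have hub : ∀ a t : ℝ, a ≤ t → (∫ s in a..t, (x s + b)) ≤ (b + c) * (t - a) := by
    intro a t hat
    have h1 : ∫ s in a..t, (x s + b) ≤ ∫ s in a..t, (b + c) := by
      apply integral_mono_on hat (hInt a t) (intervalIntegrable_const)
      intro s _
      have := abs_le.1 (hc s)
      linarith [this.2]
    have h0 : (∫ _s in a..t, ((b:ℝ) + c)) = (t - a) * (b + c) := by
      simp [smul_eq_mul]; ring
    nlinarith [h1, h0]
  have hbc : (0:ℝ) < b - c := by linarith
  constructor
  · intro tn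
    set a := tn + Δ with ha
    -- existence via IVT
    have hcont' : Continuous fun t => ∫ s in a..t, (x s + b) :=
      continuous_primitive (fun p q => hInt p q) a
    set T := a + σ * δ / (b - c) with hT
    have haT : a ≤ T := le_add_of_nonneg_right (by positivity)
    have hfa : (∫ s in a..a, (x s + b)) = 0 := integral_same
    have hfT : σ * δ ≤ ∫ s in a..T, (x s + b) := by
      have := hlb a T haT
      have hTa : (b - c) * (T - a) = σ * δ := by
        rw [hT]; field_simp; ring
      linarith
    have hIVT : ∃ t ∈ Set.Icc a T, (∫ s in a..t, (x s + b)) = σ * δ := by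
      have := intermediate_value_Icc haT hcont'.continuousOn
      apply this
      constructor
      · rw [hfa]; positivity
      · exact hfT
    obtain ⟨t', ht'Icc, ht'⟩ := hIVT
    have ht'gt : t' > a := by
      rcases lt_or_eq_of_le ht'Icc.1 with h | h
      · exact h
      · exfalso; rw [← h, hfa] at ht'; nlinarith
    refine ⟨t', ⟨ht'gt, ?_⟩, ?_⟩
    · rw [ht']; field_simp
    · rintro y ⟨hy1, hy2⟩
      have hy : (∫ s in a..y, (x s + b)) = σ * δ := by
        field_simp at hy2; linarith
      exact (hmono a).injective (by rw [hy, ht'])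
  · intro t ht
    have hstep : ∀ n, t n + σ * δ / (b + c) ≤ t (n + 1) := by
      intro n
      obtain ⟨h1, h2⟩ := ht n
      have h2' : (∫ s in (t n + Δ)..(t (n+1)), (x s + b)) = σ * δ := by
        field_simp at h2; linarith
      have := hub (t n + Δ) (t (n+1)) (le_of_lt h1)
      rw [h2'] at this
      have hbc' : (0:ℝ) < b + c := by linarith
      have h3 : σ * δ / (b + c) ≤ t (n+1) - (t n + Δ) := by
        rw [div_le_iff₀ hbc']; nlinarith
      linarith
    have hε : (0:ℝ) < σ * δ / (b + c) := div_pos (by positivity) (by linarith)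
    constructor
    · apply strictMono_nat_of_lt_succ
      intro n
      have := hstep n
      linarith
    · have hn : ∀ n : ℕ, t 0 + n * (σ * δ / (b + c)) ≤ t n := by
        intro n
        induction n with
        | zero => simp
        | succ k ih =>
          have := hstep k
          push_cast
          linarith
      apply Filter.tendsto_atTop_mono hn
      apply Filter.tendsto_atTop_add_const_left
      exact Filter.Tendsto.atTop_mul_const hε tendsto_natCast_atTop_atTop
end

section
/- Let x : ℝ → ℝ be continuous with |x| ≤ c, b > c > 0, δ > 0, σ > 0. Suppose after each firing t_n there is a non-sampling interval of length T_n^ns ∈ [T_inf, T_sup], and the next firing satisfies (1/σ)·∫_{t_n+T_n^ns}^{t_{n+1}}(x(s)+b) ds = δ. Then T_n = t_{n+1}−t_n satisfies σδ/(b+c) + T_inf ≤ T_n ≤ σδ/(b−c) + T_sup. -/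
open Set MeasureTheory Interval

/-! Since `|x| ≤ c`, the integrand `x + b` lies between `b - c > 0` and `b + c` on the sampling
window `[tₙ + Tₙ^ns, tₙ₊₁]`, so the window's length is pinned between `σδ / (b + c)` and
`σδ / (b - c)`; adding `Tₙ^ns ∈ [T_inf, T_sup]` gives the bounds on `tₙ₊₁ - tₙ`. -/

lemma integral_add_const_mem_Icc_of_abs_le {x : ℝ → ℝ} {a t c : ℝ}
    (hx : IntervalIntegrable x volume a t) (hat : a ≤ t) (hc : ∀ s ∈ Ι a t, |x s| ≤ c) (b : ℝ) :
    ∫ s in a..t, (x s + b) ∈ Icc ((b - c) * (t - a)) ((b + c) * (t - a)) := by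
  have hbound : ‖∫ s in a..t, x s‖ ≤ c * |t - a| :=
    intervalIntegral.norm_integral_le_of_norm_le_const hc
  rw [Real.norm_eq_abs, abs_of_nonneg (sub_nonneg.2 hat)] at hbound
  obtain ⟨hlo, hhi⟩ := abs_le.1 hbound
  rw [intervalIntegral.integral_add hx intervalIntegrable_const, intervalIntegral.integral_const,
    smul_eq_mul]
  constructor <;> linarith

lemma sub_mem_Icc_div_of_integral_add_const_eq {x : ℝ → ℝ} {a t b c q : ℝ}
    (hx : IntervalIntegrable x volume a t) (hat : a ≤ t) (hc : ∀ s, |x s| ≤ c) (hcb : c < b)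
    (hq : ∫ s in a..t, (x s + b) = q) :
    t - a ∈ Icc (q / (b + c)) (q / (b - c)) := by
  have hc0 : 0 ≤ c := (abs_nonneg _).trans (hc a)
  obtain ⟨hlo, hhi⟩ := hq ▸ integral_add_const_mem_Icc_of_abs_le hx hat (fun s _ => hc s) b
  exact ⟨(div_le_iff₀ (by linarith)).2 (by linarith), (le_div_iff₀ (by linarith)).2 (by linarith)⟩

theorem stmt12_general (x : ℝ → ℝ) (c b δ σ Tinf Tsup Tns tn tn1 : ℝ)
    (hx : Continuous x) (hc : ∀ s, |x s| ≤ c) (hb : b > c)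
    (hσ : σ > 0)
    (hTns : Tns ∈ Set.Icc Tinf Tsup)
    (ht : tn1 > tn + Tns)
    (hfire : (1 / σ) * ∫ s in (tn + Tns)..tn1, (x s + b) = δ) :
    σ * δ / (b + c) + Tinf ≤ tn1 - tn ∧ tn1 - tn ≤ σ * δ / (b - c) + Tsup := by
  have hI : ∫ s in (tn + Tns)..tn1, (x s + b) = σ * δ := by
    rw [← hfire, ← mul_assoc, mul_one_div_cancel hσ.ne', one_mul]
  obtain ⟨hlo, hhi⟩ :=
    sub_mem_Icc_div_of_integral_add_const_eq (hx.intervalIntegrable _ _) ht.le hc hb hI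
  obtain ⟨hTinf, hTsup⟩ := hTns
  constructor <;> linarith

theorem stmt12 (x : ℝ → ℝ) (c b δ σ Tinf Tsup Tns tn tn1 : ℝ)
    (hx : Continuous x) (hc : ∀ s, |x s| ≤ c) (hb : b > c) (hc0 : c > 0)
    (hδ : δ > 0) (hσ : σ > 0)
    (hTinf : 0 ≤ Tinf) (hTord : Tinf ≤ Tsup) (hTns : Tns ∈ Set.Icc Tinf Tsup)
    (ht : tn1 > tn + Tns)
    (hfire : (1 / σ) * ∫ s in (tn + Tns)..tn1, (x s + b) = δ) :
    σ * δ / (b + c) + Tinf ≤ tn1 - tn ∧ tn1 - tn ≤ σ * δ / (b - c) + Tsup :=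
  stmt12_general x c b δ σ Tinf Tsup Tns tn tn1 hx hc hb hσ hTns ht hfire
end
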